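/- Let n ≥ 3 be odd and k ≥ 2. Then rank((D_n)^k) = k, where D_n is the dihedral group of order 2n. -/

import Mathlib

open Subgroup

/-- Minimal length of a word over `X` (positive letters only) representing `g`. -/
noncomputable def wLen {G : Type*} [Group G] (X : Set G) (g : G) : ℕ :=
  sInf {n | ∃ l : List G, (∀ x ∈ l, x ∈ X) ∧ l.length = n ∧ l.prod = g}

/-- Minimal length of a word over `X ∪ X⁻¹` representing `g`. -/
noncomputable def sLen {G : Type*} [Group G] (X : Set G) (g : G) : ℕ :=
  sInf {n | ∃ l : List G, (∀ x ∈ l, x ∈ X ∨ x⁻¹ ∈ X) ∧ l.length = n ∧ l.prod = g}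

/-- Diameter of `G` with respect to `X` (positive words). -/
noncomputable def diamW (G : Type*) [Group G] (X : Set G) : ℕ :=
  sSup (Set.range (wLen X))

/-- Symmetric diameter of `G` with respect to `X`. -/
noncomputable def diamS (G : Type*) [Group G] (X : Set G) : ℕ :=
  sSup (Set.range (sLen X))

/-- Maximum diameter over all generating sets. -/
noncomputable def DW (G : Type*) [Group G] : ℕ :=
  sSup {d | ∃ X : Set G, Subgroup.closure X = ⊤ ∧ d = diamW G X}

/-- Maximum symmetric diameter over all generating sets. -/
noncomputable def DS (G : Type*) [Group G] : ℕ :=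
  sSup {d | ∃ X : Set G, Subgroup.closure X = ⊤ ∧ d = diamS G X}

/-- Minimal size of a generating set of `G`. -/
noncomputable def rk (G : Type*) [Group G] : ℕ :=
  sInf {n | ∃ S : Finset G, S.card = n ∧ Subgroup.closure (S : Set G) = ⊤}

/-!
The sign homomorphism `D_n → ℤ/2` maps `D_nᵏ` onto `(ℤ/2)ᵏ`, which needs `k` generators even as
a group, so the rank is at least `k`. Conversely, let `xᵢ` have the reflection `sr 0` in
coordinate `i` and the rotation `r 1` elsewhere. For `j ≠ i` the commutator `⁅xⱼ², xᵢ⁆` is `r 4`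
in coordinate `i` and trivial elsewhere; as `n` is odd, `r 4` generates all rotations, and then
`xᵢ` corrected by rotations gives every reflection in coordinate `i`. So `x₁, …, x_k` generate.
-/

open Function
open scoped commutatorElement

theorem rk_eq_rank (G : Type*) [Group G] [Group.FG G] : rk G = Group.rank G :=
  le_antisymm (Nat.sInf_le (Group.rank_spec G))
    (le_csInf ⟨_, Group.rank_spec G⟩ fun _ ⟨_, hcard, hS⟩ => hcard ▸ Group.rank_le hS)

theorem Module.finrank_le_rank_of_surjective {K V G : Type*} [DivisionRing K] [AddCommGroup V]
    [Module K V] [Group G] [Group.FG G] (f : G →* Multiplicative V) (hf : Surjective f) :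
    Module.finrank K V ≤ Group.rank G := by
  classical
  obtain ⟨S, hcard, hS⟩ := Group.rank_spec G
  set T : Finset V := S.image (Multiplicative.toAdd ∘ f)
  have hspan : Submodule.span K (T : Set V) = ⊤ := by
    refine eq_top_iff.2 fun v _ => ?_
    obtain ⟨g, hg⟩ := hf (Multiplicative.ofAdd v)
    have hle : closure (S : Set G) ≤
        (Submodule.span K (T : Set V)).toAddSubgroup.toSubgroup.comap f :=
      closure_le _ |>.2 fun s hs => Submodule.subset_span (Finset.mem_image_of_mem _ hs)
    simpa [hg] using hle (hS ▸ mem_top g : g ∈ closure (S : Set G))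
  calc Module.finrank K V = (T : Set V).finrank K := by
        rw [Set.finrank, hspan, finrank_top]
    _ ≤ T.card := finrank_span_finset_le_card T
    _ ≤ Group.rank G := hcard ▸ Finset.card_image_le

namespace DihedralGroup

variable {n : ℕ}

def sign : DihedralGroup n →* Multiplicative (ZMod 2) where
  toFun
    | r _ => 1
    | sr _ => Multiplicative.ofAdd 1
  map_one' := rfl
  map_mul' := by
    rintro (a | a) (b | b) <;> simp only [r_mul_r, r_mul_sr, sr_mul_r, sr_mul_sr] <;> rfl

theorem sign_surjective : Surjective (sign : DihedralGroup n →* Multiplicative (ZMod 2)) := by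
  intro x
  induction x using Multiplicative.rec with | ofAdd a => ?_
  fin_cases a
  exacts [⟨r 0, rfl⟩, ⟨sr 0, rfl⟩]

theorem r_mem_zpowers_of_isUnit {a : ZMod n} (ha : IsUnit a) (t : ZMod n) :
    r t ∈ zpowers (r a) :=
  mem_zpowers_iff.2 ⟨(ha.unit⁻¹ * t : ZMod n).cast, by
    rw [r_zpow, ZMod.intCast_zmod_cast, ← mul_assoc, IsUnit.mul_val_inv, one_mul]⟩

variable {ι : Type*}

section

variable [DecidableEq ι]

def piGen (i : ι) : ι → DihedralGroup n :=
  update (fun _ => r 1) i (sr 0)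

theorem mulSingle_r_four_eq_commutator {i j : ι} (hij : i ≠ j) :
    Pi.mulSingle i (r 4 : DihedralGroup n) = ⁅piGen (n := n) j ^ 2, piGen i⁆ := by
  funext m
  rcases eq_or_ne m i with rfl | hmi
  · simp only [Pi.mulSingle_eq_same, piGen, sq, commutatorElement_def, Pi.mul_apply,
      Pi.inv_apply, update_self, update_of_ne hij, r_mul_r, sr_mul_r, r_mul_sr, sr_mul_sr, inv_r,
      inv_sr]
    norm_num
  · rcases eq_or_ne m j with rfl | hmj
    · simp [piGen, hmi, commutatorElement_def, sq]
    · simp [piGen, hmi, hmj, commutatorElement_def, sq]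

theorem mulSingle_sr_eq (i : ι) (t : ZMod n) :
    Pi.mulSingle i (sr t) = piGen i * (fun _ => r 1)⁻¹ * Pi.mulSingle i (r (1 + t)) := by
  funext m
  rcases eq_or_ne m i with rfl | hmi
  · simp [piGen]
  · simp [piGen, hmi]

theorem closure_range_piGen [Finite ι] [Nontrivial ι] (hn : Odd n) :
    closure (Set.range (piGen : ι → ι → DihedralGroup n)) = ⊤ := by
  set H := closure (Set.range (piGen : ι → ι → DihedralGroup n))
  have hgen (i : ι) : piGen i ∈ H := subset_closure (Set.mem_range_self i)
  have hunit : IsUnit (4 : ZMod n) :=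
    (ZMod.isUnit_iff_coprime 4 n).2 (by simpa using (Nat.coprime_two_left.2 hn).pow_left 2)
  have hr (i : ι) (t : ZMod n) : Pi.mulSingle i (r t) ∈ H := by
    obtain ⟨j, hji⟩ := exists_ne i
    obtain ⟨z, hz⟩ := mem_zpowers_iff.1 (r_mem_zpowers_of_isUnit hunit t)
    rw [← hz, ← MonoidHom.mulSingle_apply, map_zpow, MonoidHom.mulSingle_apply,
      mulSingle_r_four_eq_commutator hji.symm, commutatorElement_def]
    have hj2 := pow_mem (hgen j) 2
    exact zpow_mem (mul_mem (mul_mem (mul_mem hj2 (hgen i)) (inv_mem hj2)) (inv_mem (hgen i))) z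
  have hrot : (fun _ => r 1) ∈ H := pi_mem_of_mulSingle_mem _ fun i => hr i 1
  have hsingle (i : ι) : ∀ d, Pi.mulSingle i d ∈ H
    | r t => hr i t
    | sr t => mulSingle_sr_eq i t ▸ mul_mem (mul_mem (hgen i) (inv_mem hrot)) (hr i _)
  exact (eq_top_iff' H).2 fun x => pi_mem_of_mulSingle_mem x fun i => hsingle i (x i)

end

theorem card_le_rank_pi [Fintype ι] [NeZero n] :
    Fintype.card ι ≤ Group.rank (ι → DihedralGroup n) := by
  simpa using Module.finrank_le_rank_of_surjective (K := ZMod 2)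
    ((MulEquiv.piMultiplicative _).symm.toMonoidHom.comp (MonoidHom.compLeft sign ι))
    ((MulEquiv.surjective _).comp sign_surjective.comp_left)

theorem rank_pi_le [Fintype ι] [Nontrivial ι] [NeZero n] (hn : Odd n) :
    Group.rank (ι → DihedralGroup n) ≤ Fintype.card ι := by
  classical
  calc Group.rank (ι → DihedralGroup n) ≤ (Finset.univ.image piGen).card := by
        apply Group.rank_le
        rw [Finset.coe_image, Finset.coe_univ, Set.image_univ, closure_range_piGen hn]
    _ ≤ Fintype.card ι := Finset.card_image_le

end DihedralGroup

theorem stmt9_general (n k : ℕ) (hodd : Odd n) (hk : 2 ≤ k) :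
    rk (Fin k → DihedralGroup n) = k := by
  have : NeZero n := ⟨hodd.pos.ne'⟩
  have : Nontrivial (Fin k) := Fin.nontrivial_iff_two_le.2 hk
  rw [rk_eq_rank]
  simpa using le_antisymm (DihedralGroup.rank_pi_le (ι := Fin k) hodd)
    DihedralGroup.card_le_rank_pi

theorem stmt9 (n k : ℕ) (hn : 3 ≤ n) (hodd : Odd n) (hk : 2 ≤ k) :
    rk (Fin k → DihedralGroup n) = k :=
  stmt9_general n k hodd hk
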